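/- Let γ ∈ [0,1) and α ∈ (−1/2 + γ/2, 1/2], and set H = α − γ/2 + 1/2 (> 0). Then: (i) r_U(−t) = r_U(t) for all t ∈ ℝ; (ii) there exists a finite constant C > 0 such that 0 ≤ r_U(t) ≤ C e^{−t(1−γ)/2} for all t ≥ 0; (iii) r_U is integrable on ℝ. -/

import Mathlib

/-!
For `t ≥ 0` the substitution `u = e^{-t} v` turns the integral defining `r_U(-t)` into
`e^{-t(2α - γ + 1)} = e^{-2tH}` times the one defining `r_U(t)`, which gives the symmetry.
For `t ≥ 0` and `0 ≤ u < 1` one has `(e^t - u)^α ≤ e^{tα} ((1 - u)^α + 1)` (for `α < 0` because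
`e^t - u ≥ e^t (1 - u)`), so `r_U(t) ≤ e^{-t(1-γ)/2} ∫₀¹ ((1 - u)^{2α} + (1 - u)^α) u^{-γ} du`,
a finite integral since `2α > -1` and `γ < 1`. This bounds `r_U` integrably on `[0, ∞)`, and
evenness does the rest.
-/

open MeasureTheory

/-- Covariance function of the Lamperti transform `U(t) = e^{-tH} Z(e^t)` of the
generalized Riemann–Liouville FBM, where `H = α - γ/2 + 1/2`:
`r_U(t) = e^{-tH} ∫₀^{min(1,e^t)} (e^t-u)^α (1-u)^α u^{-γ} du`. -/
noncomputable def rU (α γ : ℝ) (t : ℝ) : ℝ :=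
  Real.exp (-(t * (α - γ/2 + 1/2))) *
    ∫ u in Set.Ioo (0:ℝ) (min 1 (Real.exp t)), (Real.exp t - u) ^ α * (1-u) ^ α * u ^ (-γ)

open Real Set Filter

theorem integrableOn_Ioo_one_sub_rpow_mul_rpow {a b : ℝ} (ha : -1 < a) (hb : -1 < b) :
    IntegrableOn (fun u : ℝ => (1 - u) ^ a * u ^ b) (Ioo 0 1) := by
  have h_left : IntegrableOn (fun u : ℝ => (1 - u) ^ a * u ^ b) (Icc 0 (1/2)) := by
    refine IntegrableOn.continuousOn_mul ?_ ?_ isCompact_Icc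
    · exact ContinuousOn.rpow_const (by fun_prop) fun u hu => Or.inl (by linarith [hu.2])
    · exact (intervalIntegrable_iff_integrableOn_Icc_of_le (by norm_num)).1
        (intervalIntegral.intervalIntegrable_rpow' hb)
  have h_right : IntegrableOn (fun u : ℝ => (1 - u) ^ a * u ^ b) (Icc (1/2) 1) := by
    refine IntegrableOn.mul_continuousOn ?_ ?_ isCompact_Icc
    · have h := (intervalIntegral.intervalIntegrable_rpow' ha (a := 0) (b := 1/2)).comp_sub_left 1
      norm_num at h
      exact (intervalIntegrable_iff_integrableOn_Icc_of_le (by norm_num)).1 h.symm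
    · exact ContinuousOn.rpow_const continuousOn_id fun u hu => Or.inl (by linarith [hu.1])
  refine (h_left.union h_right).mono_set fun u hu => ?_
  rcases le_total u (1/2) with h | h
  · exact Or.inl ⟨hu.1.le, h⟩
  · exact Or.inr ⟨h, hu.2.le⟩

theorem setIntegral_Ioo_zero_eq_mul_setIntegral_comp_mul {c : ℝ} (hc : 0 < c) (f : ℝ → ℝ) :
    ∫ u in Ioo 0 c, f u = c * ∫ v in Ioo 0 1, f (c * v) := by
  rw [← integral_Ioc_eq_integral_Ioo, ← integral_Ioc_eq_integral_Ioo,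
    ← intervalIntegral.integral_of_le hc.le, ← intervalIntegral.integral_of_le zero_le_one]
  simp

theorem Function.Even.integrable_of_integrableOn_Ici {E : Type*} [NormedAddCommGroup E]
    {f : ℝ → E} (h_even : f.Even) (hf : IntegrableOn f (Ici 0)) : Integrable f := by
  have h_neg : (fun t => (Ici (0:ℝ)).indicator f (-t)) = (Iic 0).indicator f := by
    ext t
    by_cases ht : t ≤ 0
    · simp [indicator_of_mem, ht, h_even t]
    · simp [indicator_of_notMem, ht]
  have hf_Iic : IntegrableOn f (Iic 0) := by
    rw [← integrable_indicator_iff measurableSet_Iic, ← h_neg]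
    exact ((integrable_indicator_iff measurableSet_Ici).2 hf).comp_neg
  rw [← integrableOn_univ, ← Iic_union_Ici (a := (0:ℝ))]
  exact hf_Iic.union hf

theorem rpow_sub_le_mul_one_sub_rpow_add_one {x u : ℝ} (α : ℝ) (hx : 1 ≤ x) (hu0 : 0 ≤ u)
    (hu1 : u < 1) : (x - u) ^ α ≤ x ^ α * ((1 - u) ^ α + 1) := by
  rcases le_or_gt 0 α with hα | hα
  · calc (x - u) ^ α ≤ x ^ α := rpow_le_rpow (by linarith) (by linarith) hα
      _ ≤ x ^ α * ((1 - u) ^ α + 1) := by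
        have := rpow_nonneg (sub_nonneg.2 hu1.le) α
        nlinarith [rpow_nonneg (zero_le_one.trans hx) α]
  · calc (x - u) ^ α ≤ (x * (1 - u)) ^ α :=
          rpow_le_rpow_of_nonpos (by nlinarith) (by nlinarith) hα.le
      _ = x ^ α * (1 - u) ^ α := mul_rpow (by linarith) (by linarith)
      _ ≤ x ^ α * ((1 - u) ^ α + 1) := by
        nlinarith [rpow_nonneg (zero_le_one.trans hx) α]

theorem rU_nonneg (α γ t : ℝ) : 0 ≤ rU α γ t := by
  refine mul_nonneg (exp_nonneg _) (setIntegral_nonneg measurableSet_Ioo fun u hu => ?_)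
  have hu_exp : u < exp t := hu.2.trans_le (min_le_right _ _)
  have hu_one : u < 1 := hu.2.trans_le (min_le_left _ _)
  exact mul_nonneg (mul_nonneg (rpow_nonneg (by linarith) _) (rpow_nonneg (by linarith) _))
    (rpow_nonneg hu.1.le _)

theorem rU_of_nonneg {α γ t : ℝ} (ht : 0 ≤ t) :
    rU α γ t = exp (-(t * (α - γ/2 + 1/2))) *
      ∫ u in Ioo 0 1, (exp t - u) ^ α * (1 - u) ^ α * u ^ (-γ) := by
  rw [rU, min_eq_left (one_le_exp ht)]

theorem rU_neg_of_nonneg {α γ t : ℝ} (ht : 0 ≤ t) : rU α γ (-t) = rU α γ t := by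
  set c := exp (-t)
  have hc : 0 < c := exp_pos _
  have hc_exp : c * exp t = 1 := by rw [← exp_add, neg_add_cancel, exp_zero]
  have h_subst : ∀ v ∈ Ioo (0:ℝ) 1,
      (c - c * v) ^ α * (1 - c * v) ^ α * (c * v) ^ (-γ) =
        (c ^ α * c ^ α * c ^ (-γ)) * ((exp t - v) ^ α * (1 - v) ^ α * v ^ (-γ)) := by
    intro v hv
    rw [← mul_one_sub, ← hc_exp, ← mul_sub, mul_rpow hc.le (by linarith [hv.2]),
      mul_rpow hc.le (by linarith [hv.2, one_le_exp ht]), mul_rpow hc.le hv.1.le]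
    ring
  rw [rU, min_eq_right (exp_le_one_iff.2 (neg_nonpos.2 ht)),
    setIntegral_Ioo_zero_eq_mul_setIntegral_comp_mul hc, setIntegral_congr_fun measurableSet_Ioo
      h_subst, integral_const_mul, rU_of_nonneg ht, ← mul_assoc, ← mul_assoc]
  congr 1
  simp only [c, ← exp_mul, ← exp_add]
  ring_nf

theorem rU_even (α γ : ℝ) : (rU α γ).Even := by
  intro t
  rcases le_total 0 t with ht | ht
  · exact rU_neg_of_nonneg ht
  · simpa using (rU_neg_of_nonneg (α := α) (γ := γ) (neg_nonneg.2 ht)).symm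

theorem rU_le_integral_mul_exp {α γ t : ℝ} (hα : -(1/2) < α) (hγ : γ < 1) (ht : 0 ≤ t) :
    rU α γ t ≤ (∫ u in Ioo (0:ℝ) 1, ((1 - u) ^ (2 * α) + (1 - u) ^ α) * u ^ (-γ)) *
      exp (-(t * (1 - γ) / 2)) := by
  have h_int : IntegrableOn (fun u : ℝ => ((1 - u) ^ (2 * α) + (1 - u) ^ α) * u ^ (-γ))
      (Ioo 0 1) := by
    simpa only [Pi.add_def, add_mul] using
      (integrableOn_Ioo_one_sub_rpow_mul_rpow (by linarith) (by linarith)).add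
        (integrableOn_Ioo_one_sub_rpow_mul_rpow (by linarith) (by linarith))
  have h_pointwise : ∀ u ∈ Ioo (0:ℝ) 1, (exp t - u) ^ α * (1 - u) ^ α * u ^ (-γ) ≤
      exp (t * α) * (((1 - u) ^ (2 * α) + (1 - u) ^ α) * u ^ (-γ)) := by
    intro u hu
    have h_one_sub : 0 < 1 - u := by linarith [hu.2]
    have h_sq : (1 - u) ^ (2 * α) = (1 - u) ^ α * (1 - u) ^ α := by
      rw [two_mul, rpow_add h_one_sub]
    calc (exp t - u) ^ α * (1 - u) ^ α * u ^ (-γ)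
        ≤ exp t ^ α * ((1 - u) ^ α + 1) * (1 - u) ^ α * u ^ (-γ) := by
          have := rpow_sub_le_mul_one_sub_rpow_add_one α (one_le_exp ht) hu.1.le hu.2
          exact mul_le_mul_of_nonneg_right (mul_le_mul_of_nonneg_right this
            (rpow_nonneg h_one_sub.le _)) (rpow_nonneg hu.1.le _)
      _ = exp (t * α) * (((1 - u) ^ (2 * α) + (1 - u) ^ α) * u ^ (-γ)) := by
          rw [h_sq, ← exp_mul]
          ring
  have h_integrand_nonneg : ∀ u ∈ Ioo (0:ℝ) 1, 0 ≤ (exp t - u) ^ α * (1 - u) ^ α * u ^ (-γ) :=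
    fun u hu => mul_nonneg (mul_nonneg (rpow_nonneg (by linarith [hu.2, one_le_exp ht]) _)
      (rpow_nonneg (by linarith [hu.2]) _)) (rpow_nonneg hu.1.le _)
  calc rU α γ t
      ≤ exp (-(t * (α - γ/2 + 1/2))) *
          (exp (t * α) * ∫ u in Ioo (0:ℝ) 1, ((1 - u) ^ (2 * α) + (1 - u) ^ α) * u ^ (-γ)) := by
        rw [rU_of_nonneg ht]
        refine mul_le_mul_of_nonneg_left ?_ (exp_nonneg _)
        rw [← integral_const_mul]
        exact integral_mono_of_nonneg (ae_restrict_of_forall_mem measurableSet_Ioo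
          h_integrand_nonneg) (h_int.const_mul _) (ae_restrict_of_forall_mem measurableSet_Ioo
          h_pointwise)
    _ = _ := by
        rw [mul_left_comm, ← mul_assoc, ← exp_add]
        ring_nf

theorem exists_pos_rU_le_mul_exp {α γ : ℝ} (hα : -(1/2) < α) (hγ : γ < 1) :
    ∃ C : ℝ, 0 < C ∧ ∀ t : ℝ, 0 ≤ t → rU α γ t ≤ C * exp (-(t * (1 - γ) / 2)) := by
  refine ⟨(∫ u in Ioo (0:ℝ) 1, ((1 - u) ^ (2 * α) + (1 - u) ^ α) * u ^ (-γ)) + 1, ?_,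
    fun t ht => (rU_le_integral_mul_exp hα hγ ht).trans (by gcongr; linarith)⟩
  have : 0 ≤ ∫ u in Ioo (0:ℝ) 1, ((1 - u) ^ (2 * α) + (1 - u) ^ α) * u ^ (-γ) :=
    setIntegral_nonneg measurableSet_Ioo fun u hu => mul_nonneg
      (add_nonneg (rpow_nonneg (by linarith [hu.2]) _) (rpow_nonneg (by linarith [hu.2]) _))
      (rpow_nonneg hu.1.le _)
  linarith

theorem integrable_rU {α γ : ℝ} (hα : -(1/2) < α) (hγ : γ < 1) : Integrable (rU α γ) := by
  obtain ⟨C, -, hC⟩ := exists_pos_rU_le_mul_exp hα hγ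
  have h_meas : AEStronglyMeasurable (rU α γ) (volume.restrict (Ici 0)) := by
    refine AEStronglyMeasurable.congr ?_ (ae_restrict_of_forall_mem measurableSet_Ici
      fun t ht => (rU_of_nonneg ht).symm)
    refine (Continuous.aestronglyMeasurable (by fun_prop)).mul
      (StronglyMeasurable.integral_prod_right ?_).aestronglyMeasurable
    exact Measurable.stronglyMeasurable (by fun_prop)
  have h_bound : IntegrableOn (fun t => C * exp (-(t * (1 - γ) / 2))) (Ici 0) := by
    have : IntegrableOn (fun t => C * exp (-((1 - γ) / 2) * t)) (Ici 0) :=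
      ((exp_neg_integrableOn_Ioi (-1) (b := (1 - γ) / 2) (by linarith)).mono_set
        (Ici_subset_Ioi.2 (neg_one_lt_zero (R := ℝ)))).const_mul C
    refine this.congr_fun (fun t _ => ?_) measurableSet_Ici
    ring_nf
  refine (rU_even α γ).integrable_of_integrableOn_Ici (h_bound.mono' h_meas ?_)
  refine ae_restrict_of_forall_mem measurableSet_Ici fun t ht => ?_
  rw [norm_of_nonneg (rU_nonneg α γ t)]
  exact hC t ht

theorem rU_symm_decay_integrable_general (γ α : ℝ) (hγ0 : 0 ≤ γ) (hγ1 : γ < 1)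
    (hα1 : -(1/2) + γ/2 < α) :
    (∀ t : ℝ, rU α γ (-t) = rU α γ t) ∧
    (∃ C : ℝ, 0 < C ∧ ∀ t : ℝ, 0 ≤ t →
      0 ≤ rU α γ t ∧ rU α γ t ≤ C * Real.exp (-(t * (1-γ) / 2))) ∧
    Integrable (rU α γ) := by
  have hα : -(1/2) < α := by linarith
  obtain ⟨C, hC, h_decay⟩ := exists_pos_rU_le_mul_exp hα hγ1
  exact ⟨rU_even α γ, ⟨C, hC, fun t ht => ⟨rU_nonneg α γ t, h_decay t ht⟩⟩, integrable_rU hα hγ1⟩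

/-- Symmetry, exponential decay, and integrability of the covariance `r_U`. -/
theorem rU_symm_decay_integrable (γ α : ℝ) (hγ0 : 0 ≤ γ) (hγ1 : γ < 1)
    (hα1 : -(1/2) + γ/2 < α) (hα2 : α ≤ 1/2) :
    (∀ t : ℝ, rU α γ (-t) = rU α γ t) ∧
    (∃ C : ℝ, 0 < C ∧ ∀ t : ℝ, 0 ≤ t →
      0 ≤ rU α γ t ∧ rU α γ t ≤ C * Real.exp (-(t * (1-γ) / 2))) ∧
    Integrable (rU α γ) :=
  rU_symm_decay_integrable_general γ α hγ0 hγ1 hα1
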